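/- arXiv:2006.00601 — 6 statements merged into one kernel-verified Lean document; each statement's English description precedes it below -/
import Mathlib

section
/- Let m, n be positive integers, ρ₂ > 0, ε > 0, M ≥ 0. Let u₁, u₂ ∈ ℝ^{m×n} and h₁, h₂ ∈ ℝ^{m×n} × ℝ^{m×n} with ‖h₁‖₂ ≥ ε and ‖h₂‖₂ ≥ ε. Set a₁ = ‖∇u₁‖₁ and a₂ = ‖∇u₂‖₁, and assume a₁ ≤ M and a₂ ≤ M. Define b₁ = −(a₁/ρ₂)·h₁/‖h₁‖₂³ and b₂ = −(a₂/ρ₂)·h₂/‖h₂‖₂³. Then ‖b₁ − b₂‖₂² ≤ (32mn/(ρ₂²ε⁴))·‖u₁ − u₂‖₂² + (8M²/(ρ₂²ε⁶))·‖h₁ − h₂‖₂². -/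
/-!
Write `N_k = ‖h_k‖` and `b₁ - b₂ = -ρ₂⁻¹ • ((a₁ - a₂) • N₁⁻³ • h₁ + a₂ • (N₁⁻³ • h₁ - N₂⁻³ • h₂))`.
The first summand is controlled by `|a₁ - a₂| ≤ ‖∇(u₁ - u₂)‖₁` and
`‖∇v‖₁² ≤ mn · 2‖∇v‖₂² ≤ 16 mn ‖v‖₂²` (Cauchy–Schwarz, then `(v_{i+1} - v_i)² ≤ 2v_{i+1}² + 2v_i²`).
The second uses that `h ↦ h / ‖h‖³` is `2/ε³`-Lipschitz on `{‖h‖ ≥ ε}`: with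
`d = N₁N₂ - ⟪h₁, h₂⟫ ≥ 0` one has `‖h₁ - h₂‖² = (N₁ - N₂)² + 2d` and
`‖N₁⁻³ • h₁ - N₂⁻³ • h₂‖² = (N₁⁻² - N₂⁻²)² + 2d / (N₁N₂)³`, and both terms compare separately.
For this, `ℝ^{m×n} × ℝ^{m×n}` is identified with a Euclidean space.
-/

open Finset Filter

noncomputable def gradX (m n : ℕ) (u : Fin m → Fin n → ℝ) : Fin m → Fin n → ℝ :=
  fun i j => if h : (i : ℕ) + 1 < m then u ⟨(i : ℕ) + 1, h⟩ j - u i j else 0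

noncomputable def gradY (m n : ℕ) (u : Fin m → Fin n → ℝ) : Fin m → Fin n → ℝ :=
  fun i j => if h : (j : ℕ) + 1 < n then u i ⟨(j : ℕ) + 1, h⟩ - u i j else 0

/-- The discrete forward-difference gradient operator `∇`. -/
noncomputable def grad (m n : ℕ) (u : Fin m → Fin n → ℝ) :
    (Fin m → Fin n → ℝ) × (Fin m → Fin n → ℝ) :=
  (gradX m n u, gradY m n u)

/-- Squared Euclidean norm on `ℝ^{m×n}`. -/
noncomputable def mnorm2sq (m n : ℕ) (u : Fin m → Fin n → ℝ) : ℝ :=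
  ∑ i, ∑ j, (u i j) ^ 2

/-- Euclidean norm on `ℝ^{m×n}`. -/
noncomputable def mnorm2 (m n : ℕ) (u : Fin m → Fin n → ℝ) : ℝ :=
  Real.sqrt (mnorm2sq m n u)

/-- Euclidean inner product on `ℝ^{m×n}`. -/
noncomputable def minner (m n : ℕ) (u v : Fin m → Fin n → ℝ) : ℝ :=
  ∑ i, ∑ j, u i j * v i j

/-- Squared Euclidean norm on `ℝ^{m×n} × ℝ^{m×n}`. -/
noncomputable def pnorm2sq (m n : ℕ)
    (h : (Fin m → Fin n → ℝ) × (Fin m → Fin n → ℝ)) : ℝ :=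
  mnorm2sq m n h.1 + mnorm2sq m n h.2

/-- Euclidean norm on `ℝ^{m×n} × ℝ^{m×n}`. -/
noncomputable def pnorm2 (m n : ℕ)
    (h : (Fin m → Fin n → ℝ) × (Fin m → Fin n → ℝ)) : ℝ :=
  Real.sqrt (pnorm2sq m n h)

/-- Euclidean inner product on `ℝ^{m×n} × ℝ^{m×n}`. -/
noncomputable def pinner (m n : ℕ)
    (h g : (Fin m → Fin n → ℝ) × (Fin m → Fin n → ℝ)) : ℝ :=
  minner m n h.1 g.1 + minner m n h.2 g.2

/-- `‖∇u‖₁`, the (anisotropic) ℓ¹ norm of the discrete gradient. -/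
noncomputable def gradL1 (m n : ℕ) (u : Fin m → Fin n → ℝ) : ℝ :=
  ∑ i, ∑ j, (|gradX m n u i j| + |gradY m n u i j|)

/-- View `u ∈ ℝ^{m×n}` as a vector in `ℝ^{mn}`. -/
noncomputable def flatten (m n : ℕ) (u : Fin m → Fin n → ℝ) : Fin m × Fin n → ℝ :=
  fun ij => u ij.1 ij.2

/-- Squared Euclidean norm on `ℝ^p`. -/
noncomputable def vnorm2sq (p : ℕ) (v : Fin p → ℝ) : ℝ := ∑ k, (v k) ^ 2

/-- The augmented Lagrangian of the unconstrained `L₁/L₂` model: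
`L(u, h; b) = ‖∇u‖₁/‖h‖₂ + (λ/2)‖Au − f‖₂² + ρ₂⟨b, ∇u − h⟩ + (ρ₂/2)‖h − ∇u‖₂²`. -/
noncomputable def augL (m n p : ℕ) (A : Matrix (Fin p) (Fin m × Fin n) ℝ) (f : Fin p → ℝ)
    (lam ρ₂ : ℝ) (u : Fin m → Fin n → ℝ)
    (h b : (Fin m → Fin n → ℝ) × (Fin m → Fin n → ℝ)) : ℝ :=
  gradL1 m n u / pnorm2 m n h
    + lam / 2 * vnorm2sq p (A.mulVec (flatten m n u) - f)
    + ρ₂ * pinner m n b (grad m n u - h)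
    + ρ₂ / 2 * pnorm2sq m n (h - grad m n u)

/-- Adjoint of `gradX` with respect to the Euclidean inner products. -/
noncomputable def gradTX (m n : ℕ) (q : Fin m → Fin n → ℝ) : Fin m → Fin n → ℝ :=
  fun i j =>
    (if 0 < (i : ℕ) then
        q ⟨(i : ℕ) - 1, Nat.lt_of_le_of_lt (Nat.sub_le _ _) i.isLt⟩ j
      else 0)
      - (if (i : ℕ) + 1 < m then q i j else 0)

/-- Adjoint of `gradY` with respect to the Euclidean inner products. -/
noncomputable def gradTY (m n : ℕ) (q : Fin m → Fin n → ℝ) : Fin m → Fin n → ℝ :=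
  fun i j =>
    (if 0 < (j : ℕ) then
        q i ⟨(j : ℕ) - 1, Nat.lt_of_le_of_lt (Nat.sub_le _ _) j.isLt⟩
      else 0)
      - (if (j : ℕ) + 1 < n then q i j else 0)

/-- `∇ᵀ`, the adjoint of the discrete gradient operator. -/
noncomputable def gradAdj (m n : ℕ)
    (h : (Fin m → Fin n → ℝ) × (Fin m → Fin n → ℝ)) : Fin m → Fin n → ℝ :=
  fun i j => gradTX m n h.1 i j + gradTY m n h.2 i j

theorem abs_inv_sq_sub_inv_sq_le {ε r s : ℝ} (hε : 0 < ε) (hr : ε ≤ r) (hs : ε ≤ s) :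
    |r⁻¹ ^ 2 - s⁻¹ ^ 2| ≤ 2 / ε ^ 3 * |r - s| := by
  have hr₀ : 0 < r := hε.trans_le hr
  have hs₀ : 0 < s := hε.trans_le hs
  have hfactor : r⁻¹ ^ 2 - s⁻¹ ^ 2 = -(r⁻¹ * s⁻¹ ^ 2 + s⁻¹ * r⁻¹ ^ 2) * (r - s) := by
    field_simp; ring
  have hbound (a b : ℝ) (ha : ε ≤ a) (hb : ε ≤ b) : a⁻¹ * b⁻¹ ^ 2 ≤ 1 / ε ^ 3 := by
    have : 0 < b := hε.trans_le hb
    calc _ ≤ ε⁻¹ * ε⁻¹ ^ 2 := by gcongr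
      _ = 1 / ε ^ 3 := by ring
  rw [hfactor, abs_mul, abs_neg, abs_of_pos (by positivity)]
  gcongr
  linarith [hbound r s hr hs, hbound s r hs hr, (by ring : 2 / ε ^ 3 = 2 * (1 / ε ^ 3))]

section InnerProductSpace

variable {E : Type*} [NormedAddCommGroup E] [InnerProductSpace ℝ E]

theorem norm_inv_pow_three_smul_sub_sq_le {ε : ℝ} {x y : E} (hε : 0 < ε)
    (hx : ε ≤ ‖x‖) (hy : ε ≤ ‖y‖) :
    ‖(‖x‖ ^ 3)⁻¹ • x - (‖y‖ ^ 3)⁻¹ • y‖ ^ 2 ≤ 4 / ε ^ 6 * ‖x - y‖ ^ 2 := by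
  set r := ‖x‖
  set s := ‖y‖
  have hr : 0 < r := hε.trans_le hx
  have hs : 0 < s := hε.trans_le hy
  set d := r * s - inner ℝ x y
  have hd : 0 ≤ d := sub_nonneg.2 (real_inner_le_norm x y)
  have hlhs :
      ‖(r ^ 3)⁻¹ • x - (s ^ 3)⁻¹ • y‖ ^ 2 = (r⁻¹ ^ 2 - s⁻¹ ^ 2) ^ 2 + 2 * d / (r * s) ^ 3 := by
    rw [norm_sub_sq_real, norm_smul, norm_smul, real_inner_smul_left, real_inner_smul_right]
    simp only [Real.norm_eq_abs, abs_inv, abs_pow, abs_of_pos hr, abs_of_pos hs, d]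
    field_simp
    ring
  have hrhs : ‖x - y‖ ^ 2 = (r - s) ^ 2 + 2 * d := by
    rw [norm_sub_sq_real]; ring
  have hradial : (r⁻¹ ^ 2 - s⁻¹ ^ 2) ^ 2 ≤ 4 / ε ^ 6 * (r - s) ^ 2 :=
    calc (r⁻¹ ^ 2 - s⁻¹ ^ 2) ^ 2 = |r⁻¹ ^ 2 - s⁻¹ ^ 2| ^ 2 := (sq_abs _).symm
      _ ≤ (2 / ε ^ 3 * |r - s|) ^ 2 := by gcongr; exact abs_inv_sq_sub_inv_sq_le hε hx hy
      _ = 4 / ε ^ 6 * (r - s) ^ 2 := by rw [mul_pow, sq_abs]; ring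
  have hangular : 2 * d / (r * s) ^ 3 ≤ 4 / ε ^ 6 * (2 * d) := by
    have : ε ^ 6 ≤ (r * s) ^ 3 := by
      calc ε ^ 6 = (ε * ε) ^ 3 := by ring
        _ ≤ (r * s) ^ 3 := by gcongr
    calc 2 * d / (r * s) ^ 3 ≤ 2 * d / ε ^ 6 := by gcongr
      _ ≤ 4 / ε ^ 6 * (2 * d) := by rw [div_mul_eq_mul_div]; gcongr ?_ / _; linarith
  rw [hlhs, hrhs]
  linarith

theorem norm_smul_sub_smul_sq_le {ρ ε M a₁ a₂ : ℝ} {x₁ x₂ : E} (hρ : 0 < ρ) (hε : 0 < ε)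
    (ha₂ : 0 ≤ a₂) (ha₂M : a₂ ≤ M) (hx₁ : ε ≤ ‖x₁‖) (hx₂ : ε ≤ ‖x₂‖) :
    ‖(-(a₁ / (ρ * ‖x₁‖ ^ 3))) • x₁ - (-(a₂ / (ρ * ‖x₂‖ ^ 3))) • x₂‖ ^ 2 ≤
      2 / (ρ ^ 2 * ε ^ 4) * (a₁ - a₂) ^ 2 + 8 * M ^ 2 / (ρ ^ 2 * ε ^ 6) * ‖x₁ - x₂‖ ^ 2 := by
  have hN₁ : 0 < ‖x₁‖ := hε.trans_le hx₁
  set p := (a₁ - a₂) • (‖x₁‖ ^ 3)⁻¹ • x₁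
  set q := a₂ • ((‖x₁‖ ^ 3)⁻¹ • x₁ - (‖x₂‖ ^ 3)⁻¹ • x₂)
  have hsplit :
      (-(a₁ / (ρ * ‖x₁‖ ^ 3))) • x₁ - (-(a₂ / (ρ * ‖x₂‖ ^ 3))) • x₂ = (-ρ⁻¹) • (p + q) := by
    simp only [p, q]; module
  have hp : ‖p‖ ^ 2 ≤ (a₁ - a₂) ^ 2 / ε ^ 4 := by
    have : ‖p‖ ^ 2 = (a₁ - a₂) ^ 2 / ‖x₁‖ ^ 4 := by
      simp only [p, norm_smul, Real.norm_eq_abs, mul_pow, sq_abs, abs_inv, abs_pow, abs_norm]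
      field_simp
    rw [this]; gcongr
  have hq : ‖q‖ ^ 2 ≤ M ^ 2 * (4 / ε ^ 6 * ‖x₁ - x₂‖ ^ 2) := by
    rw [norm_smul, mul_pow, Real.norm_eq_abs, sq_abs]
    gcongr
    exact norm_inv_pow_three_smul_sub_sq_le hε hx₁ hx₂
  calc _ = ρ⁻¹ ^ 2 * ‖p + q‖ ^ 2 := by
        rw [hsplit, norm_smul, mul_pow, norm_neg, Real.norm_eq_abs, sq_abs]
    _ ≤ ρ⁻¹ ^ 2 * (2 * (‖p‖ ^ 2 + ‖q‖ ^ 2)) := by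
        gcongr
        exact (pow_le_pow_left₀ (norm_nonneg _) (norm_add_le p q) 2).trans add_sq_le
    _ ≤ ρ⁻¹ ^ 2 * (2 * ((a₁ - a₂) ^ 2 / ε ^ 4 + M ^ 2 * (4 / ε ^ 6 * ‖x₁ - x₂‖ ^ 2))) := by
        gcongr
    _ = _ := by field_simp; ring

end InnerProductSpace

noncomputable def finFwdDiff {k : ℕ} (w : Fin k → ℝ) : Fin k → ℝ :=
  fun i => if h : (i : ℕ) + 1 < k then w ⟨(i : ℕ) + 1, h⟩ - w i else 0

theorem finFwdDiff_sub {k : ℕ} (v w : Fin k → ℝ) :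
    finFwdDiff (v - w) = finFwdDiff v - finFwdDiff w := by
  ext i
  simp only [finFwdDiff, Pi.sub_apply]
  split_ifs <;> ring

theorem sum_finFwdDiff_sq_le {k : ℕ} (w : Fin k → ℝ) :
    ∑ i, finFwdDiff w i ^ 2 ≤ 4 * ∑ i, w i ^ 2 := by
  cases k with
  | zero => simp
  | succ k =>
    have hlast : finFwdDiff w (Fin.last k) = 0 := by simp [finFwdDiff]
    have hcast (i : Fin k) : finFwdDiff w i.castSucc = w i.succ - w i.castSucc := by
      simp [finFwdDiff, Fin.succ]
    have hsucc : ∑ i : Fin k, w i.succ ^ 2 ≤ ∑ i, w i ^ 2 := by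
      rw [Fin.sum_univ_succ (fun i => w i ^ 2)]
      linarith [sq_nonneg (w 0)]
    have hcastSucc : ∑ i : Fin k, w i.castSucc ^ 2 ≤ ∑ i, w i ^ 2 := by
      rw [Fin.sum_univ_castSucc (fun i => w i ^ 2)]
      linarith [sq_nonneg (w (Fin.last k))]
    calc ∑ i, finFwdDiff w i ^ 2 = ∑ i : Fin k, (w i.succ - w i.castSucc) ^ 2 := by
          simp [Fin.sum_univ_castSucc, hlast, hcast]
      _ ≤ ∑ i : Fin k, 2 * (w i.succ ^ 2 + w i.castSucc ^ 2) := by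
          gcongr with i
          simpa only [← sub_eq_add_neg, neg_sq] using add_sq_le (a := w i.succ) (b := -w i.castSucc)
      _ ≤ 4 * ∑ i, w i ^ 2 := by
          rw [← Finset.mul_sum, Finset.sum_add_distrib]
          linarith

section DiscreteGradient

variable {m n : ℕ}

theorem gradX_apply (u : Fin m → Fin n → ℝ) (i : Fin m) (j : Fin n) :
    gradX m n u i j = finFwdDiff (fun i' => u i' j) i := rfl

theorem gradY_apply (u : Fin m → Fin n → ℝ) (i : Fin m) (j : Fin n) :
    gradY m n u i j = finFwdDiff (u i) j := rfl

theorem gradX_sub (u v : Fin m → Fin n → ℝ) : gradX m n (u - v) = gradX m n u - gradX m n v := by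
  ext i j
  simp only [gradX_apply, Pi.sub_apply]
  exact congrFun (finFwdDiff_sub (fun i' => u i' j) (fun i' => v i' j)) i

theorem gradY_sub (u v : Fin m → Fin n → ℝ) : gradY m n (u - v) = gradY m n u - gradY m n v := by
  ext i j
  simp only [gradY_apply, Pi.sub_apply]
  exact congrFun (finFwdDiff_sub (u i) (v i)) j

theorem sum_gradX_sq_le (u : Fin m → Fin n → ℝ) :
    ∑ i, ∑ j, gradX m n u i j ^ 2 ≤ 4 * mnorm2sq m n u := by
  rw [mnorm2sq, Finset.sum_comm, Finset.sum_comm (f := fun i j => u i j ^ 2), Finset.mul_sum]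
  exact Finset.sum_le_sum fun j _ => sum_finFwdDiff_sq_le (fun i => u i j)

theorem sum_gradY_sq_le (u : Fin m → Fin n → ℝ) :
    ∑ i, ∑ j, gradY m n u i j ^ 2 ≤ 4 * mnorm2sq m n u := by
  rw [mnorm2sq, Finset.mul_sum]
  exact Finset.sum_le_sum fun i _ => sum_finFwdDiff_sq_le (u i)

theorem gradL1_nonneg (u : Fin m → Fin n → ℝ) : 0 ≤ gradL1 m n u := by
  unfold gradL1; positivity

theorem abs_gradL1_sub_le (u v : Fin m → Fin n → ℝ) :
    |gradL1 m n u - gradL1 m n v| ≤ gradL1 m n (u - v) := by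
  simp only [gradL1, gradX_sub, gradY_sub, ← Finset.sum_sub_distrib, Pi.sub_apply]
  refine (Finset.abs_sum_le_sum_abs _ _).trans (Finset.sum_le_sum fun i _ => ?_)
  refine (Finset.abs_sum_le_sum_abs _ _).trans (Finset.sum_le_sum fun j _ => ?_)
  rw [add_sub_add_comm]
  exact (abs_add_le _ _).trans
    (add_le_add (abs_abs_sub_abs_le_abs_sub _ _) (abs_abs_sub_abs_le_abs_sub _ _))

theorem gradL1_sq_le (u : Fin m → Fin n → ℝ) :
    gradL1 m n u ^ 2 ≤ 16 * m * n * mnorm2sq m n u := by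
  calc gradL1 m n u ^ 2
      = (∑ p : Fin m × Fin n, (|gradX m n u p.1 p.2| + |gradY m n u p.1 p.2|)) ^ 2 := by
        rw [gradL1, Fintype.sum_prod_type]
    _ ≤ m * n * ∑ p : Fin m × Fin n, (|gradX m n u p.1 p.2| + |gradY m n u p.1 p.2|) ^ 2 := by
        simpa using sq_sum_le_card_mul_sum_sq (s := Finset.univ)
          (f := fun p : Fin m × Fin n => |gradX m n u p.1 p.2| + |gradY m n u p.1 p.2|)
    _ ≤ m * n * ∑ p : Fin m × Fin n, 2 * (gradX m n u p.1 p.2 ^ 2 + gradY m n u p.1 p.2 ^ 2) := by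
        gcongr with p
        simpa only [sq_abs] using
          add_sq_le (a := |gradX m n u p.1 p.2|) (b := |gradY m n u p.1 p.2|)
    _ = 2 * m * n * (∑ i, ∑ j, gradX m n u i j ^ 2 + ∑ i, ∑ j, gradY m n u i j ^ 2) := by
        simp only [← Finset.mul_sum, Finset.sum_add_distrib, Fintype.sum_prod_type]
        ring
    _ ≤ 2 * m * n * (4 * mnorm2sq m n u + 4 * mnorm2sq m n u) := by
        gcongr
        · exact sum_gradX_sq_le u
        · exact sum_gradY_sq_le u
    _ = 16 * m * n * mnorm2sq m n u := by ring

end DiscreteGradient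

noncomputable def pairToEuclidean (m n : ℕ) :
    ((Fin m → Fin n → ℝ) × (Fin m → Fin n → ℝ)) →ₗ[ℝ]
      EuclideanSpace ℝ ((Fin m × Fin n) ⊕ (Fin m × Fin n)) where
  toFun h := WithLp.toLp 2 (Sum.elim (fun p => h.1 p.1 p.2) (fun p => h.2 p.1 p.2))
  map_add' _ _ := by ext (_ | _) <;> rfl
  map_smul' _ _ := by ext (_ | _) <;> rfl

theorem pnorm2sq_eq_norm_sq (m n : ℕ) (h : (Fin m → Fin n → ℝ) × (Fin m → Fin n → ℝ)) :
    pnorm2sq m n h = ‖pairToEuclidean m n h‖ ^ 2 := by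
  simp [pairToEuclidean, EuclideanSpace.norm_sq_eq, Fintype.sum_sum_type, Fintype.sum_prod_type,
    pnorm2sq, mnorm2sq]

theorem pnorm2_eq_norm (m n : ℕ) (h : (Fin m → Fin n → ℝ) × (Fin m → Fin n → ℝ)) :
    pnorm2 m n h = ‖pairToEuclidean m n h‖ := by
  rw [pnorm2, pnorm2sq_eq_norm_sq, Real.sqrt_sq (norm_nonneg _)]

theorem stmt0_general (m n : ℕ) (ρ₂ ε M : ℝ)
    (hρ : 0 < ρ₂) (hε : 0 < ε)
    (u₁ u₂ : Fin m → Fin n → ℝ)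
    (h₁ h₂ : (Fin m → Fin n → ℝ) × (Fin m → Fin n → ℝ))
    (hh₁ : ε ≤ pnorm2 m n h₁) (hh₂ : ε ≤ pnorm2 m n h₂)
    (ha₂ : gradL1 m n u₂ ≤ M)
    (b₁ b₂ : (Fin m → Fin n → ℝ) × (Fin m → Fin n → ℝ))
    (hb₁ : b₁ = (-(gradL1 m n u₁ / (ρ₂ * (pnorm2 m n h₁) ^ 3))) • h₁)
    (hb₂ : b₂ = (-(gradL1 m n u₂ / (ρ₂ * (pnorm2 m n h₂) ^ 3))) • h₂) :
    pnorm2sq m n (b₁ - b₂) ≤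
      (32 * (m : ℝ) * n / (ρ₂ ^ 2 * ε ^ 4)) * mnorm2sq m n (u₁ - u₂)
        + (8 * M ^ 2 / (ρ₂ ^ 2 * ε ^ 6)) * pnorm2sq m n (h₁ - h₂) := by
  have hgrad : (gradL1 m n u₁ - gradL1 m n u₂) ^ 2 ≤ 16 * m * n * mnorm2sq m n (u₁ - u₂) := by
    rw [← sq_abs]
    exact (pow_le_pow_left₀ (abs_nonneg _) (abs_gradL1_sub_le u₁ u₂) 2).trans (gradL1_sq_le _)
  rw [pnorm2_eq_norm] at hh₁ hh₂ hb₁ hb₂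
  simp only [hb₁, hb₂, pnorm2sq_eq_norm_sq, map_sub, map_smul]
  calc _ ≤ 2 / (ρ₂ ^ 2 * ε ^ 4) * (gradL1 m n u₁ - gradL1 m n u₂) ^ 2
        + 8 * M ^ 2 / (ρ₂ ^ 2 * ε ^ 6) * ‖pairToEuclidean m n h₁ - pairToEuclidean m n h₂‖ ^ 2 :=
      norm_smul_sub_smul_sq_le hρ hε (gradL1_nonneg u₂) ha₂ hh₁ hh₂
    _ ≤ 2 / (ρ₂ ^ 2 * ε ^ 4) * (16 * m * n * mnorm2sq m n (u₁ - u₂))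
        + 8 * M ^ 2 / (ρ₂ ^ 2 * ε ^ 6) * ‖pairToEuclidean m n h₁ - pairToEuclidean m n h₂‖ ^ 2 := by
      gcongr
    _ = _ := by ring

/-- Paper's Lemma 4.1: bound on the change of the ADMM dual variable. -/
theorem stmt0 (m n : ℕ) (hm : 0 < m) (hn : 0 < n) (ρ₂ ε M : ℝ)
    (hρ : 0 < ρ₂) (hε : 0 < ε) (hM : 0 ≤ M)
    (u₁ u₂ : Fin m → Fin n → ℝ)
    (h₁ h₂ : (Fin m → Fin n → ℝ) × (Fin m → Fin n → ℝ))
    (hh₁ : ε ≤ pnorm2 m n h₁) (hh₂ : ε ≤ pnorm2 m n h₂)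
    (ha₁ : gradL1 m n u₁ ≤ M) (ha₂ : gradL1 m n u₂ ≤ M)
    (b₁ b₂ : (Fin m → Fin n → ℝ) × (Fin m → Fin n → ℝ))
    (hb₁ : b₁ = (-(gradL1 m n u₁ / (ρ₂ * (pnorm2 m n h₁) ^ 3))) • h₁)
    (hb₂ : b₂ = (-(gradL1 m n u₂ / (ρ₂ * (pnorm2 m n h₂) ^ 3))) • h₂) :
    pnorm2sq m n (b₁ - b₂) ≤
      (32 * (m : ℝ) * n / (ρ₂ ^ 2 * ε ^ 4)) * mnorm2sq m n (u₁ - u₂)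
        + (8 * M ^ 2 / (ρ₂ ^ 2 * ε ^ 6)) * pnorm2sq m n (h₁ - h₂) :=
  stmt0_general m n ρ₂ ε M hρ hε u₁ u₂ h₁ h₂ hh₁ hh₂ ha₂ b₁ b₂ hb₁ hb₂
end

section
/- Let E be a finite-dimensional real inner product space, and let ε > 0. For x, y ∈ E with ‖x‖ ≥ ε and ‖y‖ ≥ ε, one has ‖ x/‖x‖³ − y/‖y‖³ ‖ ≤ (2/ε³)·‖x − y‖. Equivalently, the gradient ∇f(x) = −x/‖x‖³ of the function f(x) = 1/‖x‖ is Lipschitz continuous with constant 2/ε³ on the set M_ε = {x : ‖x‖ ≥ ε}. -/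
/-!
Expanding both sides in the inner product, `‖r • x - s • y‖²` and `‖x - y‖²` are affine in
`⟪x, y⟫` with slopes `-2rs` and `-2`, and agree at `⟪x, y⟫ = ‖x‖‖y‖` with the one-dimensional
quantities `(r‖x‖ - s‖y‖)²` and `(‖x‖ - ‖y‖)²`. With `r = ‖x‖⁻³`, `s = ‖y‖⁻³` the comparison
therefore reduces to `rs ≤ ε⁻⁶` and to the fact that `t ↦ t⁻²` is `2/ε³`-Lipschitz on `[ε, ∞)`.
-/

open RealInnerProductSpace

section InnerProductSpace

variable {E : Type*} [NormedAddCommGroup E] [InnerProductSpace ℝ E]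

theorem norm_smul_sub_smul_sq (r s : ℝ) (x y : E) :
    ‖r • x - s • y‖ ^ 2 = (r * ‖x‖ - s * ‖y‖) ^ 2 + 2 * (r * s) * (‖x‖ * ‖y‖ - ⟪x, y⟫) := by
  rw [norm_sub_sq_real, norm_smul, norm_smul, real_inner_smul_left, real_inner_smul_right,
    Real.norm_eq_abs, Real.norm_eq_abs, mul_pow, mul_pow, sq_abs, sq_abs]
  ring

theorem norm_smul_sub_smul_le {r s K : ℝ} {x y : E} (hK : 0 ≤ K) (hrs : r * s ≤ K ^ 2)
    (hnorm : |r * ‖x‖ - s * ‖y‖| ≤ K * |‖x‖ - ‖y‖|) :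
    ‖r • x - s • y‖ ≤ K * ‖x - y‖ := by
  apply le_of_pow_le_pow_left₀ two_ne_zero (by positivity)
  have hdiff : ‖x - y‖ ^ 2 = (‖x‖ - ‖y‖) ^ 2 + 2 * (‖x‖ * ‖y‖ - ⟪x, y⟫) := by
    simpa using norm_smul_sub_smul_sq 1 1 x y
  have hradial : (r * ‖x‖ - s * ‖y‖) ^ 2 ≤ K ^ 2 * (‖x‖ - ‖y‖) ^ 2 := by
    simpa only [sq_abs, mul_pow, abs_mul, abs_of_nonneg hK] using
      pow_le_pow_left₀ (abs_nonneg _) hnorm 2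
  have hangular : 0 ≤ ‖x‖ * ‖y‖ - ⟪x, y⟫ := sub_nonneg.mpr (real_inner_le_norm x y)
  rw [norm_smul_sub_smul_sq, mul_pow, hdiff]
  nlinarith [mul_le_mul_of_nonneg_right hrs hangular]

end InnerProductSpace

theorem abs_inv_sq_sub_inv_sq_le_s5 {ε a b : ℝ} (hε : 0 < ε) (ha : ε ≤ a) (hb : ε ≤ b) :
    |(a ^ 2)⁻¹ - (b ^ 2)⁻¹| ≤ 2 / ε ^ 3 * |a - b| := by
  have ha₀ : 0 < a := hε.trans_le ha
  have hb₀ : 0 < b := hε.trans_le hb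
  have hfactor : (a ^ 2)⁻¹ - (b ^ 2)⁻¹ = (b - a) * ((a * b ^ 2)⁻¹ + (a ^ 2 * b)⁻¹) := by
    field_simp
    ring
  have hcube_le {u v : ℝ} (hu : ε ≤ u) (hv : ε ≤ v) : (u * v ^ 2)⁻¹ ≤ (ε ^ 3)⁻¹ :=
    inv_anti₀ (by positivity) (by rw [pow_succ']; gcongr; linarith)
  have hsum : (a * b ^ 2)⁻¹ + (a ^ 2 * b)⁻¹ ≤ 2 / ε ^ 3 := by
    have := hcube_le ha hb
    have := hcube_le hb ha
    rw [mul_comm (a ^ 2)]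
    linarith [div_eq_mul_inv 2 (ε ^ 3)]
  rw [hfactor, abs_mul, abs_sub_comm, abs_of_pos (a := _ + _) (by positivity), mul_comm]
  exact mul_le_mul_of_nonneg_right hsum (abs_nonneg _)

theorem stmt5_general {E : Type*} [NormedAddCommGroup E] [InnerProductSpace ℝ E]
    (ε : ℝ) (hε : 0 < ε) (x y : E)
    (hx : ε ≤ ‖x‖) (hy : ε ≤ ‖y‖) :
    ‖(‖x‖ ^ 3)⁻¹ • x - (‖y‖ ^ 3)⁻¹ • y‖ ≤ (2 / ε ^ 3) * ‖x - y‖ := by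
  have hinv_cube_le {t : ℝ} (ht : ε ≤ t) : (t ^ 3)⁻¹ ≤ (ε ^ 3)⁻¹ :=
    inv_anti₀ (by positivity) (by gcongr)
  have hinv_cube_mul {t : ℝ} (ht : ε ≤ t) : (t ^ 3)⁻¹ * t = (t ^ 2)⁻¹ := by
    have : t ≠ 0 := (hε.trans_le ht).ne'
    field_simp
  apply norm_smul_sub_smul_le (by positivity)
  · calc (‖x‖ ^ 3)⁻¹ * (‖y‖ ^ 3)⁻¹ ≤ (ε ^ 3)⁻¹ * (ε ^ 3)⁻¹ :=
          mul_le_mul (hinv_cube_le hx) (hinv_cube_le hy) (by positivity) (by positivity)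
      _ = ((ε ^ 3)⁻¹) ^ 2 := (sq _).symm
      _ ≤ (2 / ε ^ 3) ^ 2 := by
          gcongr
          rw [div_eq_mul_inv]
          linarith [inv_pos.mpr (pow_pos hε 3)]
  · rw [hinv_cube_mul hx, hinv_cube_mul hy]
    exact abs_inv_sq_sub_inv_sq_le_s5 hε hx hy

/-- Paper's Lemma 4.4: the gradient `x ↦ −x/‖x‖³` of `f(x) = 1/‖x‖` is
`2/ε³`-Lipschitz on `{x : ‖x‖ ≥ ε}`. -/
theorem stmt5 {E : Type*} [NormedAddCommGroup E] [InnerProductSpace ℝ E]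
    [FiniteDimensional ℝ E] (ε : ℝ) (hε : 0 < ε) (x y : E)
    (hx : ε ≤ ‖x‖) (hy : ε ≤ ‖y‖) :
    ‖(‖x‖ ^ 3)⁻¹ • x - (‖y‖ ^ 3)⁻¹ • y‖ ≤ (2 / ε ^ 3) * ‖x - y‖ :=
  stmt5_general ε hε x y hx hy
end

section
/- Let E be a finite-dimensional real inner product space and ε > 0. For all x, y ∈ E with ‖x‖ ≥ ε and ‖y‖ ≥ ε, and every real a ≥ 0, one has a/‖y‖ ≤ a/‖x‖ − ⟨ a x/‖x‖³, y − x ⟩ + (a/ε³)·‖y − x‖². That is, the descent-lemma inequality f(y) ≤ f(x) + ⟨∇f(x), y − x⟩ + (L/2)‖y − x‖² holds for f(x) = a/‖x‖ with L = 2a/ε³ on the set {x : ‖x‖ ≥ ε}. -/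
/-!
With `r = ‖x‖`, `s = ‖y‖` and `t = ⟪x, y⟫`, the gap between `a / s` and the tangent model of
`a / ‖·‖` at `x` plus `a ‖y - x‖² / (r² s)` equals `a (r s - t) (1 / r³ + 2 / (r² s))`, which
is nonnegative by Cauchy–Schwarz. On `{‖·‖ ≥ ε}` the curvature factor `1 / (r² s)` is at most
`1 / ε³`.
-/

open RealInnerProductSpace

lemma div_le_tangent_of_le_mul {a r s t : ℝ} (ha : 0 ≤ a) (hr : 0 < r) (hs : 0 < s)
    (ht : t ≤ r * s) :
    a / s ≤ a / r - a / r ^ 3 * (t - r ^ 2) + a * (s ^ 2 - 2 * t + r ^ 2) / (r ^ 2 * s) := by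
  have gap : a / r - a / r ^ 3 * (t - r ^ 2) + a * (s ^ 2 - 2 * t + r ^ 2) / (r ^ 2 * s) - a / s
      = a * (r * s - t) * (1 / r ^ 3 + 2 / (r ^ 2 * s)) := by
    field_simp
    ring
  have : 0 ≤ a * (r * s - t) * (1 / r ^ 3 + 2 / (r ^ 2 * s)) :=
    mul_nonneg (mul_nonneg ha (sub_nonneg.2 ht)) (by positivity)
  linarith

lemma div_norm_le_tangent {E : Type*} [NormedAddCommGroup E] [InnerProductSpace ℝ E]
    {a : ℝ} (ha : 0 ≤ a) {x y : E} (hx : x ≠ 0) (hy : y ≠ 0) :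
    a / ‖y‖ ≤ a / ‖x‖ - ⟪(a / ‖x‖ ^ 3) • x, y - x⟫ + a * ‖y - x‖ ^ 2 / (‖x‖ ^ 2 * ‖y‖) := by
  rw [real_inner_smul_left, inner_sub_right, real_inner_self_eq_norm_sq, norm_sub_sq_real,
    real_inner_comm x y]
  exact div_le_tangent_of_le_mul ha (norm_pos_iff.2 hx) (norm_pos_iff.2 hy)
    (real_inner_le_norm x y)

theorem stmt10_general {E : Type*} [NormedAddCommGroup E] [InnerProductSpace ℝ E]
    (ε a : ℝ) (hε : 0 < ε) (ha : 0 ≤ a)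
    (x y : E) (hx : ε ≤ ‖x‖) (hy : ε ≤ ‖y‖) :
    a / ‖y‖ ≤ a / ‖x‖ - (inner ℝ ((a / ‖x‖ ^ 3) • x) (y - x) : ℝ)
      + (a / ε ^ 3) * ‖y - x‖ ^ 2 := by
  have hx0 : x ≠ 0 := norm_pos_iff.1 (hε.trans_le hx)
  have hy0 : y ≠ 0 := norm_pos_iff.1 (hε.trans_le hy)
  have hcube : ε ^ 3 ≤ ‖x‖ ^ 2 * ‖y‖ := by
    rw [pow_succ]
    gcongr
  have hcurv : a * ‖y - x‖ ^ 2 / (‖x‖ ^ 2 * ‖y‖) ≤ a / ε ^ 3 * ‖y - x‖ ^ 2 := by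
    rw [div_mul_eq_mul_div, mul_comm a]
    gcongr
  linarith [div_norm_le_tangent ha hx0 hy0]

/-- Descent-lemma inequality (A.8) for `f(x) = a/‖x‖` with `L = 2a/ε³` on
`{x : ‖x‖ ≥ ε}`. -/
theorem stmt10 {E : Type*} [NormedAddCommGroup E] [InnerProductSpace ℝ E]
    [FiniteDimensional ℝ E] (ε a : ℝ) (hε : 0 < ε) (ha : 0 ≤ a)
    (x y : E) (hx : ε ≤ ‖x‖) (hy : ε ≤ ‖y‖) :
    a / ‖y‖ ≤ a / ‖x‖ - (inner ℝ ((a / ‖x‖ ^ 3) • x) (y - x) : ℝ)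
      + (a / ε ^ 3) * ‖y - x‖ ^ 2 :=
  stmt10_general ε a hε ha x y hx hy
end

section
/- Let E be a finite-dimensional real inner product space, ε > 0, M ≥ 0, ρ > 0, z ∈ E, and let a be a real with 0 ≤ a ≤ M. Set L = 2M/ε³. Suppose h, h⁺ ∈ E satisfy ‖h‖ ≥ ε, ‖h⁺‖ ≥ ε, and h⁺ satisfies the first-order optimality condition −a·h⁺/‖h⁺‖³ + ρ(h⁺ − z) = 0. Then [a/‖h⁺‖ + (ρ/2)‖h⁺ − z‖²] − [a/‖h‖ + (ρ/2)‖h − z‖²] ≤ −((ρ − 3L)/2)·‖h⁺ − h‖². -/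
open scoped RealInnerProductSpace

/-- Inequality (A.10) in the proof of the paper's Lemma 4.2: sufficient
decrease of the `h`-subproblem objective `h ↦ a/‖h‖ + (ρ/2)‖h − z‖²`. -/
theorem stmt12 {E : Type*} [NormedAddCommGroup E] [InnerProductSpace ℝ E]
    [FiniteDimensional ℝ E] (ε M a ρ : ℝ) (hε : 0 < ε) (hM : 0 ≤ M)
    (ha : 0 ≤ a) (haM : a ≤ M) (hρ : 0 < ρ) (z : E)
    (h hP : E) (hh : ε ≤ ‖h‖) (hhP : ε ≤ ‖hP‖)
    (hopt : (-(a / ‖hP‖ ^ 3)) • hP + ρ • (hP - z) = 0) :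
    (a / ‖hP‖ + ρ / 2 * ‖hP - z‖ ^ 2) - (a / ‖h‖ + ρ / 2 * ‖h - z‖ ^ 2) ≤
      -((ρ - 3 * (2 * M / ε ^ 3)) / 2) * ‖hP - h‖ ^ 2 := by
  set s := ‖hP‖ with hs_def
  set t := ‖h‖ with ht_def
  have hs : 0 < s := lt_of_lt_of_le hε hhP
  have ht : 0 < t := lt_of_lt_of_le hε hh
  have e1 : ρ • (hP - z) = (a / s ^ 3) • hP := by
    have h0 := hopt
    rw [neg_smul, neg_add_eq_zero] at h0
    exact h0.symm
  have e2 : ρ * ⟪hP - z, hP - h⟫ = (a / s ^ 3) * ⟪hP, hP - h⟫ := by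
    have := congrArg (fun x : E => ⟪x, hP - h⟫) e1
    simpa [real_inner_smul_left] using this
  have n1 : ‖hP - z‖ ^ 2 - ‖h - z‖ ^ 2 = 2 * ⟪hP - z, hP - h⟫ - ‖hP - h‖ ^ 2 := by
    have hz : h - z = (hP - z) - (hP - h) := by abel
    have e : ‖h - z‖ ^ 2 = ‖hP - z‖ ^ 2 - 2 * ⟪hP - z, hP - h⟫ + ‖hP - h‖ ^ 2 := by
      rw [hz]; exact norm_sub_sq_real _ _
    linarith
  have n2 : ⟪hP, hP - h⟫ = (s ^ 2 - t ^ 2 + ‖hP - h‖ ^ 2) / 2 := by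
    have hn := norm_sub_sq_real hP h
    rw [inner_sub_right, real_inner_self_eq_norm_sq]
    linarith [hn]
  have lhs_eq : (a / s + ρ / 2 * ‖hP - z‖ ^ 2) - (a / t + ρ / 2 * ‖h - z‖ ^ 2)
      = a / s - a / t + a / s ^ 3 * (s ^ 2 - t ^ 2) / 2
        + a / s ^ 3 * ‖hP - h‖ ^ 2 / 2 - ρ / 2 * ‖hP - h‖ ^ 2 := by
    linear_combination ρ / 2 * n1 + e2 + (a / s ^ 3) * n2
  have hA : a / s - a / t + a / s ^ 3 * (s ^ 2 - t ^ 2) / 2 ≤ 0 := by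
    have key : a / s - a / t + a / s ^ 3 * (s ^ 2 - t ^ 2) / 2
        = -(a * (t - s) ^ 2 * (t + 2 * s)) / (2 * s ^ 3 * t) := by
      field_simp; ring
    rw [key]
    apply div_nonpos_of_nonpos_of_nonneg
    · exact neg_nonpos.mpr (by positivity)
    · positivity
  have hB : a / s ^ 3 ≤ 2 * M / ε ^ 3 := by
    rw [div_le_div_iff₀ (by positivity) (by positivity)]
    nlinarith [pow_le_pow_left₀ hε.le hhP 3, pow_pos hε 3]
  have d2 : (0:ℝ) ≤ ‖hP - h‖ ^ 2 := sq_nonneg _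
  have hC : a / s ^ 3 * ‖hP - h‖ ^ 2 ≤ 2 * M / ε ^ 3 * ‖hP - h‖ ^ 2 :=
    mul_le_mul_of_nonneg_right hB d2
  have hD : (0:ℝ) ≤ 2 * M / ε ^ 3 * ‖hP - h‖ ^ 2 := by positivity
  rw [lhs_eq]
  nlinarith [hA, hC, hD]
end

section
/- Let m, n be positive integers, let A be a real p×(mn) matrix, f ∈ ℝ^p, λ > 0, ρ₂ > 0, ε > 0. Let u ∈ ℝ^{m×n} and h ∈ ℝ^{m×n} × ℝ^{m×n} with ‖h‖₂ ≥ ε, set a = ‖∇u‖₁, and let b = −(a/ρ₂)·h/‖h‖₂³. Then the augmented Lagrangian satisfies L(u, h; b) = ‖∇u‖₁/‖h‖₂ + (λ/2)‖Au − f‖₂² + ρ₂⟨b, ∇u − h⟩ + (ρ₂/2)‖h − ∇u‖₂² ≥ a/‖h‖₂ − a²/(ρ₂ε⁴). -/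
open Finset Filter

/-! Writing `b = d • h`, the dual and penalty terms complete a square:
`ρ₂⟨d h, ∇u − h⟩ + (ρ₂/2)‖h − ∇u‖² = (ρ₂/2)‖∇u − h + d h‖² − (ρ₂/2) d² ‖h‖²`.
Dropping the square and the data-fidelity term leaves `‖∇u‖₁/‖h‖ − (ρ₂/2) d² ‖h‖²`; for the given
`d = −a/(ρ₂‖h‖³)` the subtracted term is `a²/(2ρ₂‖h‖⁴) ≤ a²/(ρ₂ε⁴)`. -/

lemma neg_sq_mul_sq_div_two_le (d x y : ℝ) :
    -(d ^ 2 * x ^ 2) / 2 ≤ d * (x * (y - x)) + (x - y) ^ 2 / 2 := by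
  nlinarith [sq_nonneg (y - x + d * x)]

lemma neg_sq_mul_mnorm2sq_div_two_le (m n : ℕ) (d : ℝ) (x y : Fin m → Fin n → ℝ) :
    -(d ^ 2 * mnorm2sq m n x) / 2 ≤ d * minner m n x (y - x) + mnorm2sq m n (x - y) / 2 := by
  simp only [mnorm2sq, minner, Finset.mul_sum, Finset.sum_div, neg_div, ← Finset.sum_neg_distrib,
    ← Finset.sum_add_distrib]
  gcongr with i _ j _
  simpa only [Pi.sub_apply, neg_div] using neg_sq_mul_sq_div_two_le d (x i j) (y i j)

lemma neg_sq_mul_pnorm2sq_div_two_le (m n : ℕ) (d : ℝ)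
    (x y : (Fin m → Fin n → ℝ) × (Fin m → Fin n → ℝ)) :
    -(d ^ 2 * pnorm2sq m n x) / 2 ≤ d * pinner m n x (y - x) + pnorm2sq m n (x - y) / 2 := by
  have h₁ := neg_sq_mul_mnorm2sq_div_two_le m n d x.1 y.1
  have h₂ := neg_sq_mul_mnorm2sq_div_two_le m n d x.2 y.2
  simp only [pnorm2sq, pinner, Prod.fst_sub, Prod.snd_sub]
  linarith

lemma pinner_smul_left (m n : ℕ) (c : ℝ) (x y : (Fin m → Fin n → ℝ) × (Fin m → Fin n → ℝ)) :
    pinner m n (c • x) y = c * pinner m n x y := by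
  simp only [pinner, minner, Prod.smul_fst, Prod.smul_snd, Pi.smul_apply, smul_eq_mul,
    Finset.mul_sum, mul_add, mul_assoc]

lemma pnorm2_sq (m n : ℕ) (h : (Fin m → Fin n → ℝ) × (Fin m → Fin n → ℝ)) :
    pnorm2 m n h ^ 2 = pnorm2sq m n h :=
  Real.sq_sqrt (by unfold pnorm2sq mnorm2sq; positivity)

lemma vnorm2sq_nonneg (p : ℕ) (v : Fin p → ℝ) : 0 ≤ vnorm2sq p v := by
  unfold vnorm2sq; positivity

lemma gradL1_div_sub_le_augL_smul (m n p : ℕ) (A : Matrix (Fin p) (Fin m × Fin n) ℝ)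
    (f : Fin p → ℝ) {lam ρ₂ : ℝ} (hlam : 0 ≤ lam) (hρ : 0 ≤ ρ₂) (d : ℝ)
    (u : Fin m → Fin n → ℝ) (h : (Fin m → Fin n → ℝ) × (Fin m → Fin n → ℝ)) :
    gradL1 m n u / pnorm2 m n h - ρ₂ / 2 * d ^ 2 * pnorm2sq m n h ≤
      augL m n p A f lam ρ₂ u h (d • h) := by
  have hsquare := mul_le_mul_of_nonneg_left
    (neg_sq_mul_pnorm2sq_div_two_le m n d h (grad m n u)) hρ
  have hdata : 0 ≤ lam / 2 * vnorm2sq p (A.mulVec (flatten m n u) - f) :=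
    mul_nonneg (by positivity) (vnorm2sq_nonneg p _)
  rw [augL, pinner_smul_left]
  linarith

theorem stmt15_general (m n p : ℕ)
    (A : Matrix (Fin p) (Fin m × Fin n) ℝ) (f : Fin p → ℝ)
    (lam ρ₂ ε : ℝ) (hlam : 0 < lam) (hρ : 0 < ρ₂) (hε : 0 < ε)
    (u : Fin m → Fin n → ℝ)
    (h : (Fin m → Fin n → ℝ) × (Fin m → Fin n → ℝ))
    (hh : ε ≤ pnorm2 m n h)
    (b : (Fin m → Fin n → ℝ) × (Fin m → Fin n → ℝ))
    (hb : b = (-(gradL1 m n u / (ρ₂ * (pnorm2 m n h) ^ 3))) • h) :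
    gradL1 m n u / pnorm2 m n h - (gradL1 m n u) ^ 2 / (ρ₂ * ε ^ 4) ≤
      augL m n p A f lam ρ₂ u h b := by
  set a := gradL1 m n u
  set H := pnorm2 m n h
  have hH : 0 < H := hε.trans_le hh
  have hP : pnorm2sq m n h = H ^ 2 := (pnorm2_sq m n h).symm
  have hpenalty :
      ρ₂ / 2 * (-(a / (ρ₂ * H ^ 3))) ^ 2 * pnorm2sq m n h = a ^ 2 / (2 * ρ₂ * H ^ 4) := by
    rw [hP]
    field_simp
  have hpenalty_le : a ^ 2 / (2 * ρ₂ * H ^ 4) ≤ a ^ 2 / (ρ₂ * ε ^ 4) := by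
    gcongr
    linarith
  have hbound := gradL1_div_sub_le_augL_smul m n p A f hlam.le hρ.le (-(a / (ρ₂ * H ^ 3))) u h
  rw [hpenalty] at hbound
  rw [hb]
  linarith

/-- Lower bound on the augmented Lagrangian from the proof of the paper's
Theorem 4.4. -/
theorem stmt15 (m n p : ℕ) (hm : 0 < m) (hn : 0 < n)
    (A : Matrix (Fin p) (Fin m × Fin n) ℝ) (f : Fin p → ℝ)
    (lam ρ₂ ε : ℝ) (hlam : 0 < lam) (hρ : 0 < ρ₂) (hε : 0 < ε)
    (u : Fin m → Fin n → ℝ)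
    (h : (Fin m → Fin n → ℝ) × (Fin m → Fin n → ℝ))
    (hh : ε ≤ pnorm2 m n h)
    (b : (Fin m → Fin n → ℝ) × (Fin m → Fin n → ℝ))
    (hb : b = (-(gradL1 m n u / (ρ₂ * (pnorm2 m n h) ^ 3))) • h) :
    gradL1 m n u / pnorm2 m n h - (gradL1 m n u) ^ 2 / (ρ₂ * ε ^ 4) ≤
      augL m n p A f lam ρ₂ u h b :=
  stmt15_general m n p A f lam ρ₂ ε hlam hρ hε u h hh b hb
end

section
/- Let E be a finite-dimensional real inner product space, let g ∈ E with g ≠ 0, and let a > 0, ρ > 0. Define D = a/(ρ‖g‖³), C = ( (27D + 2 + √((27D + 2)² − 4)) / 2 )^{1/3}, and τ = 1/3 + (1/3)(C + 1/C). Then h* = τ·g is a global minimizer of the function F(h) = a/‖h‖ + (ρ/2)‖h − g‖² over all h ∈ E with h ≠ 0; in particular τ satisfies the cubic equation τ³ − τ² = D with τ > 1. -/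
lemma phi_min_aux (ρ b r s : ℝ) (hρ : 0 < ρ) (hb : 0 < b) (hr : 0 < r) (hs : b < s) :
    ρ*s^2*(s-b)/s + ρ/2*(s-b)^2 ≤ ρ*s^2*(s-b)/r + ρ/2*(r-b)^2 := by
  have hs0 : 0 < s := hb.trans hs
  have key : (ρ*s^2*(s-b)/r + ρ/2*(r-b)^2) - (ρ*s^2*(s-b)/s + ρ/2*(s-b)^2)
      = ρ*(r-s)^2*(r+2*s-2*b)/(2*r) := by
    field_simp
    ring
  have hnum : 0 ≤ ρ*(r-s)^2*(r+2*s-2*b) :=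
    mul_nonneg (mul_nonneg hρ.le (sq_nonneg _)) (by linarith)
  have hpos : 0 ≤ ρ*(r-s)^2*(r+2*s-2*b)/(2*r) :=
    div_nonneg hnum (by linarith)
  linarith [key]

set_option maxHeartbeats 1000000 in
/-- Closed-form solution of the `h`-subproblem in the paper's ADMM scheme:
the minimizer of `h ↦ a/‖h‖ + (ρ/2)‖h − g‖²` over `h ≠ 0` is `τ·g`, where
`τ > 1` is the Cardano-formula root of `τ³ − τ² = D = a/(ρ‖g‖³)`. -/
theorem stmt17 {E : Type*} [NormedAddCommGroup E] [InnerProductSpace ℝ E]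
    [FiniteDimensional ℝ E] (g : E) (hg : g ≠ 0) (a ρ : ℝ)
    (ha : 0 < a) (hρ : 0 < ρ) (D C τ : ℝ)
    (hD : D = a / (ρ * ‖g‖ ^ 3))
    (hC : C = ((27 * D + 2 + Real.sqrt ((27 * D + 2) ^ 2 - 4)) / 2) ^ ((1 : ℝ) / 3))
    (hτ : τ = 1 / 3 + 1 / 3 * (C + 1 / C)) :
    (∀ h : E, h ≠ 0 →
        a / ‖τ • g‖ + ρ / 2 * ‖τ • g - g‖ ^ 2 ≤ a / ‖h‖ + ρ / 2 * ‖h - g‖ ^ 2) ∧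
      τ ^ 3 - τ ^ 2 = D ∧ 1 < τ := by
  have hb : 0 < ‖g‖ := norm_pos_iff.mpr hg
  have hD0 : 0 < D := by rw [hD]; positivity
  set S : ℝ := 27 * D + 2 with hS
  have hS2 : 2 < S := by simp only [hS]; linarith
  have hsq : 0 ≤ S ^ 2 - 4 := by nlinarith
  have hsqrt : Real.sqrt (S ^ 2 - 4) ^ 2 = S ^ 2 - 4 := Real.sq_sqrt hsq
  have htnn : 0 ≤ Real.sqrt (S ^ 2 - 4) := Real.sqrt_nonneg _
  have hx1 : 1 < (S + Real.sqrt (S ^ 2 - 4)) / 2 := by linarith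
  have hx0 : (0:ℝ) < (S + Real.sqrt (S ^ 2 - 4)) / 2 := by linarith
  have hC1 : 1 < C := by
    rw [hC]
    rw [Real.one_lt_rpow_iff_of_pos hx0]
    exact Or.inl ⟨hx1, by norm_num⟩
  have hC0 : 0 < C := lt_trans one_pos hC1
  have hC3 : C ^ 3 = (S + Real.sqrt (S ^ 2 - 4)) / 2 := by
    rw [hC, ← Real.rpow_natCast (((S + Real.sqrt (S ^ 2 - 4)) / 2) ^ ((1:ℝ)/3)) 3,
      ← Real.rpow_mul hx0.le]
    norm_num
  have hCinv : C ^ 3 * ((S - Real.sqrt (S ^ 2 - 4)) / 2) = 1 := by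
    rw [hC3]; nlinarith [hsqrt]
  have hCC : C ^ 3 + 1 / C ^ 3 = S := by
    have h1 : 1 / C ^ 3 = (S - Real.sqrt (S ^ 2 - 4)) / 2 := by
      field_simp
      linear_combination (-2) * hCinv
    rw [h1, hC3]; ring
  have hCne : C ≠ 0 := hC0.ne'
  have hτ' : 3 * τ - 1 = C + 1 / C := by rw [hτ]; ring
  have hid : (C + 1 / C) ^ 3 - 3 * (C + 1 / C) = C ^ 3 + 1 / C ^ 3 := by
    field_simp; ring
  have hkey : (3 * τ - 1) ^ 3 - 3 * (3 * τ - 1) = S := by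
    rw [hτ', hid]; exact hCC
  have hcubic : τ ^ 3 - τ ^ 2 = D := by linear_combination (hkey + hS) / 27
  have hτ1 : 1 < τ := by
    have hexp : C + 1 / C - 2 = (C - 1) ^ 2 / C := by field_simp; ring
    have h2 : 0 < (C - 1) ^ 2 / C := div_pos (by nlinarith) hC0
    rw [hτ]; linarith
  refine ⟨?_, hcubic, hτ1⟩
  intro h hh
  have hr : 0 < ‖h‖ := norm_pos_iff.mpr hh
  have hτ0 : 0 < τ := by linarith
  have hng : ‖τ • g‖ = τ * ‖g‖ := by
    rw [norm_smul, Real.norm_eq_abs, abs_of_pos hτ0]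
  have hsub : τ • g - g = (τ - 1) • g := by rw [sub_smul, one_smul]
  have hng2 : ‖τ • g - g‖ = (τ - 1) * ‖g‖ := by
    rw [hsub, norm_smul, Real.norm_eq_abs, abs_of_pos (by linarith)]
  have ha' : a = ρ * (τ * ‖g‖) ^ 2 * ((τ * ‖g‖) - ‖g‖) := by
    have hb3 : ρ * ‖g‖ ^ 3 ≠ 0 := (mul_pos hρ (pow_pos hb 3)).ne'
    have h3 : D * (ρ * ‖g‖ ^ 3) = a := by
      rw [hD]; field_simp
    linear_combination (-(ρ * ‖g‖ ^ 3)) * hcubic - h3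
  have hs : ‖g‖ < τ * ‖g‖ := by
    have := mul_lt_mul_of_pos_right hτ1 hb; simpa using this
  have hmin := phi_min_aux ρ ‖g‖ ‖h‖ (τ * ‖g‖) hρ hb hr hs
  have hLHS : a / ‖τ • g‖ + ρ / 2 * ‖τ • g - g‖ ^ 2
      = ρ * (τ * ‖g‖) ^ 2 * ((τ * ‖g‖) - ‖g‖) / (τ * ‖g‖)
        + ρ / 2 * ((τ * ‖g‖) - ‖g‖) ^ 2 := by
    rw [hng, hng2, ← ha']; ring
  have hd2 : (‖h‖ - ‖g‖) ^ 2 ≤ ‖h - g‖ ^ 2 := by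
    have h1 : |‖h‖ - ‖g‖| ≤ ‖h - g‖ := abs_norm_sub_norm_le h g
    calc (‖h‖ - ‖g‖) ^ 2 = |‖h‖ - ‖g‖| ^ 2 := (sq_abs _).symm
      _ ≤ ‖h - g‖ ^ 2 := by
          apply pow_le_pow_left₀ (abs_nonneg _) h1
  have hRHS : ρ * (τ * ‖g‖) ^ 2 * ((τ * ‖g‖) - ‖g‖) / ‖h‖ + ρ / 2 * (‖h‖ - ‖g‖) ^ 2
      ≤ a / ‖h‖ + ρ / 2 * ‖h - g‖ ^ 2 := by
    rw [← ha']
    have : ρ / 2 * (‖h‖ - ‖g‖) ^ 2 ≤ ρ / 2 * ‖h - g‖ ^ 2 := by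
      apply mul_le_mul_of_nonneg_left hd2 (by positivity)
    linarith
  rw [hLHS]
  exact le_trans hmin hRHS
end
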